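/- For any positive integers n ≥ k ≥ 1, the central factorial number of even indices U(n,k) equals the number of ordered pairs (π₁, π₂) of set partitions of {1,…,n} into k nonempty blocks such that the set of block minima of π₁ equals the set of block minima of π₂. -/

import Mathlib

open Polynomial

/-- The central factorial numbers of even indices `U n k = T (2n) (2k)`. -/
def U : ℕ → ℕ → ℕ
  | 0, 0 => 1
  | 0, _ + 1 => 0
  | _ + 1, 0 => 0
  | n + 1, k + 1 => U n k + (k + 1) ^ 2 * U n (k + 1)

/-- The set of minima of the blocks of a set partition of `{1, …, n}` (modelled on `Fin n`). -/
def blockMins {n : ℕ} (P : Finpartition (Finset.univ : Finset (Fin n))) : Finset (Fin n) :=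
  P.parts.attach.image fun B =>
    B.1.min' (Finset.nonempty_iff_ne_empty.2 (by simpa using P.ne_bot B.2))

/-!
A partition of a finite linear order is determined by the map sending each element to the
minimum of its block, and these maps are exactly the decreasing idempotent self-maps. Such a map
with fixed-point set `S` amounts to choosing, for every `a ∉ S`, an element of `S` below `a`.
So the pairs of partitions with common set of minima `S` number `∏_{a ∉ S} #{s ∈ S | s < a}²`,
and the sum of these over the `k`-subsets `S` of `{0, …, n - 1}` obeys the recursion of `U`:
split according to whether `n - 1 ∈ S`.
-/

open Finset

theorem Nat.card_pairs_eq_sum_sq_card_fiber {α β : Type*} [Finite α] (φ : α → β) (t : Finset β) :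
    Nat.card {p : α × α // φ p.1 ∈ t ∧ φ p.1 = φ p.2} = ∑ b ∈ t, Nat.card {a // φ a = b} ^ 2 := by
  let e : {p : α × α // φ p.1 ∈ t ∧ φ p.1 = φ p.2} ≃
      Σ b : t, {a // φ a = b} × {a // φ a = b} :=
    { toFun := fun p => ⟨⟨φ p.1.1, p.2.1⟩, ⟨p.1.1, rfl⟩, ⟨p.1.2, p.2.2.symm⟩⟩
      invFun := fun x => ⟨(x.2.1, x.2.2), by simp [x.2.1.2, x.2.2.2]⟩
      left_inv := fun _ => rfl
      right_inv := by
        rintro ⟨⟨b, hb⟩, ⟨a, h⟩, a'⟩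
        simp only at h
        subst h
        rfl }
  rw [Nat.card_congr e, Nat.card_sigma, ← sum_coe_sort t]
  simp only [Nat.card_prod, sq]

instance {α β : Type*} [DecidableEq β] (f : α → β) : DecidableRel (Setoid.ker f) :=
  fun a b => decEq (f a) (f b)

namespace Finpartition

theorem ext_part {α : Type*} [DecidableEq α] {s : Finset α} {P Q : Finpartition s}
    (h : ∀ a ∈ s, P.part a = Q.part a) : P = Q := by
  have parts_subset : ∀ {P Q : Finpartition s}, (∀ a ∈ s, P.part a = Q.part a) →
      P.parts ⊆ Q.parts := by
    intro P Q h B hB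
    obtain ⟨a, ha⟩ := P.nonempty_of_mem_parts hB
    rw [← P.part_eq_of_mem hB ha, h a (P.le hB ha)]
    exact Q.part_mem.2 (P.le hB ha)
  exact Finpartition.ext ((parts_subset h).antisymm (parts_subset fun a ha => (h a ha).symm))

variable {α : Type*} [Fintype α] [LinearOrder α]

def minMap (P : Finpartition (univ : Finset α)) (a : α) : α :=
  (P.part a).min' (P.part_nonempty.2 (mem_univ a))

section minMap
variable (P : Finpartition (univ : Finset α))

theorem minMap_mem_part (a : α) : P.minMap a ∈ P.part a := min'_mem _ _

theorem minMap_le (a : α) : P.minMap a ≤ a := min'_le _ _ (P.mem_part (mem_univ a))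

theorem part_minMap (a : α) : P.part (P.minMap a) = P.part a :=
  P.part_eq_of_mem (P.part_mem.2 (mem_univ a)) (P.minMap_mem_part a)

theorem minMap_eq_minMap_iff {a b : α} : P.minMap a = P.minMap b ↔ P.part a = P.part b := by
  refine ⟨fun h => by rw [← P.part_minMap a, h, P.part_minMap], fun h => ?_⟩
  simp only [minMap, h]

theorem minMap_eq_min' {B : Finset α} (hB : B ∈ P.parts) {a : α} (ha : a ∈ B) :
    P.minMap a = B.min' ⟨a, ha⟩ := by
  unfold minMap
  congr 1
  exact P.part_eq_of_mem hB ha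

theorem minMap_minMap (a : α) : P.minMap (P.minMap a) = P.minMap a :=
  P.minMap_eq_minMap_iff.2 (P.part_minMap a)

theorem ofSetoid_ker_minMap : ofSetoid (Setoid.ker P.minMap) = P := by
  refine ext_part fun a _ => Finset.ext fun b => ?_
  rw [mem_part_ofSetoid_iff_rel, P.mem_part_iff_part_eq_part (mem_univ b) (mem_univ a)]
  exact P.minMap_eq_minMap_iff.trans eq_comm

end minMap

theorem minMap_ofSetoid_ker {f : α → α} (hle : ∀ a, f a ≤ a) (hf : ∀ a, f (f a) = f a) :
    (ofSetoid (Setoid.ker f)).minMap = f := by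
  funext a
  refine le_antisymm (min'_le _ _ ?_) (le_min' _ _ _ fun b hb => ?_)
  · exact mem_part_ofSetoid_iff_rel.2 (hf a).symm
  · rw [mem_part_ofSetoid_iff_rel] at hb
    exact (show f a = f b from hb) ▸ hle b

variable (α) in
def equivMinMap :
    Finpartition (univ : Finset α) ≃ {f : α → α // (∀ a, f a ≤ a) ∧ ∀ a, f (f a) = f a} where
  toFun P := ⟨P.minMap, P.minMap_le, P.minMap_minMap⟩
  invFun f := ofSetoid (Setoid.ker f.1)
  left_inv := ofSetoid_ker_minMap
  right_inv f := Subtype.ext (minMap_ofSetoid_ker f.2.1 f.2.2)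

end Finpartition

section minMapEquivPi
variable {α : Type*} [Fintype α] [LinearOrder α]

def minMapEquivPi (S : Finset α) :
    {f : α → α // ((∀ a, f a ≤ a) ∧ ∀ a, f (f a) = f a) ∧ ∀ a, f a = a ↔ a ∈ S} ≃
      ((a : ↥Sᶜ) → ↥{s ∈ S | s < a.1}) where
  toFun f a := ⟨f.1 a, mem_filter.2
    ⟨(f.2.2 _).1 (f.2.1.2 a), (f.2.1.1 a).lt_of_ne fun h => mem_compl.1 a.2 ((f.2.2 a).1 h)⟩⟩
  invFun g := ⟨fun a => if h : a ∈ S then a else g ⟨a, mem_compl.2 h⟩, by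
    have hg : ∀ a, (g a).1 ∈ S ∧ (g a).1 < a := fun a => mem_filter.1 (g a).2
    refine ⟨⟨fun a => ?_, fun a => ?_⟩, fun a => ?_⟩ <;> dsimp only
    · split_ifs
      exacts [le_rfl, (hg _).2.le]
    · by_cases h : a ∈ S
      · simp only [dif_pos h]
      · simp only [dif_neg h, dif_pos (hg _).1]
    · split_ifs with h
      · simp [h]
      · simpa [h] using (hg _).2.ne⟩
  left_inv f := Subtype.ext <| funext fun a => by
    by_cases h : a ∈ S
    · simp [h, (f.2.2 a).2 h]
    · simp [h]
  right_inv g := funext fun a => by simp [mem_compl.1 a.2]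

theorem Finpartition.card_minMap_fixed_eq_prod (S : Finset α) :
    Nat.card {P : Finpartition (univ : Finset α) // ∀ a, P.minMap a = a ↔ a ∈ S} =
      ∏ a ∈ Sᶜ, #{s ∈ S | s < a} := by
  refine (Nat.card_congr (((Finpartition.equivMinMap α).subtypeEquiv fun _ => Iff.rfl).trans
    ((Equiv.subtypeSubtypeEquivSubtypeInter _ _).trans (minMapEquivPi S)))).trans ?_
  rw [Nat.card_pi, ← prod_coe_sort Sᶜ]
  simp only [Nat.card_eq_finsetCard]

end minMapEquivPi

section blockMins
variable {n : ℕ} (P : Finpartition (univ : Finset (Fin n)))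

theorem mem_blockMins_iff (a : Fin n) : a ∈ blockMins P ↔ P.minMap a = a := by
  simp only [blockMins, mem_image, mem_attach, true_and, Subtype.exists]
  constructor
  · rintro ⟨B, hB, rfl⟩
    exact P.minMap_eq_min' hB (min'_mem _ _)
  · intro h
    exact ⟨P.part a, P.part_mem.2 (mem_univ a), h⟩

theorem card_blockMins : #(blockMins P) = #P.parts := by
  refine (card_image_of_injOn fun B _ C _ h => Subtype.ext ?_).trans card_attach
  exact P.eq_of_mem_parts B.2 C.2 (min'_mem _ _) (h.symm ▸ min'_mem _ _)

end blockMins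

theorem card_blockMins_eq_prod {n : ℕ} (S : Finset (Fin n)) :
    Nat.card {P // blockMins P = S} = ∏ i ∈ Sᶜ, #{s ∈ S | s < i} := by
  rw [← Finpartition.card_minMap_fixed_eq_prod]
  exact Nat.card_congr <| Equiv.subtypeEquivRight fun P => by
    simp [Finset.ext_iff, mem_blockMins_iff]

theorem prod_compl_card_filter_lt_map_val {n : ℕ} (S : Finset (Fin n)) :
    ∏ i ∈ Sᶜ, #{s ∈ S | s < i} =
      ∏ i ∈ range n \ S.map Fin.valEmbedding, #{t ∈ S.map Fin.valEmbedding | t < i} := by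
  rw [← Nat.Iio_eq_range, ← Fin.map_valEmbedding_univ, ← Finset.map_sdiff, ← compl_eq_univ_sdiff,
    prod_map]
  refine prod_congr rfl fun i _ => ?_
  rw [filter_map, card_map]
  rfl

theorem U_eq_sum_powersetCard_range (n k : ℕ) :
    U n k = ∑ T ∈ powersetCard k (range n), ∏ i ∈ range n \ T, #{t ∈ T | t < i} ^ 2 := by
  induction n generalizing k with
  | zero => cases k <;> simp [U]
  | succ n ih =>
    cases k with
    | zero => simp [U]
    | succ k =>
      have hn : n ∉ range n := notMem_range_self
      rw [U, ih, ih, range_add_one, powersetCard_succ_insert hn, sum_union, sum_image, add_comm,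
        mul_sum]
      · congr 1 <;> refine sum_congr rfl fun T hT => ?_
        · rw [mem_powersetCard] at hT
          have hnT : n ∉ T := fun h => hn (hT.1 h)
          rw [insert_sdiff_of_notMem _ hnT, prod_insert (fun h => hn (mem_sdiff.1 h).1),
            filter_true_of_mem fun t ht => mem_range.1 (hT.1 ht), hT.2]
        · rw [insert_sdiff_insert, sdiff_insert_of_notMem hn]
          refine prod_congr rfl fun i hi => ?_
          rw [filter_insert, if_neg (mem_range.1 (mem_sdiff.1 hi).1).not_gt]
      · exact (insert_erase_invOn (a := n)).2.injOn.mono fun T hT h =>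
          hn ((mem_powersetCard.1 hT).1 h)
      · exact disjoint_left.2 fun T hT hT' => by
          obtain ⟨T', -, rfl⟩ := mem_image.1 hT'
          exact hn ((mem_powersetCard.1 hT).1 (mem_insert_self n T'))

theorem stmt6_general (n k : ℕ) :
    U n k = Nat.card {pq : Finpartition (Finset.univ : Finset (Fin n)) ×
        Finpartition (Finset.univ : Finset (Fin n)) //
      pq.1.parts.card = k ∧ pq.2.parts.card = k ∧ blockMins pq.1 = blockMins pq.2} := by
  have hrange : powersetCard k (range n) =
      (powersetCard k (univ : Finset (Fin n))).map (mapEmbedding Fin.valEmbedding).toEmbedding := by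
    rw [← powersetCard_map, Fin.map_valEmbedding_univ, Nat.Iio_eq_range]
  calc U n k = ∑ S ∈ powersetCard k (univ : Finset (Fin n)), (∏ i ∈ Sᶜ, #{s ∈ S | s < i}) ^ 2 := by
        simp only [U_eq_sum_powersetCard_range, hrange, sum_map, RelEmbedding.coe_toEmbedding,
          mapEmbedding_apply, prod_compl_card_filter_lt_map_val, prod_pow]
    _ = ∑ S ∈ powersetCard k (univ : Finset (Fin n)), Nat.card {P // blockMins P = S} ^ 2 := by
        simp only [card_blockMins_eq_prod]
    _ = _ := by
        rw [← Nat.card_pairs_eq_sum_sq_card_fiber]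
        refine Nat.card_congr (Equiv.subtypeEquivRight fun pq => ?_)
        simp only [mem_powersetCard, subset_univ, true_and, ← card_blockMins]
        exact ⟨fun ⟨hP, h⟩ => ⟨hP, h ▸ hP, h⟩, fun ⟨hP, _, h⟩ => ⟨hP, h⟩⟩

/-- The central factorial number `U n k` is the number of ordered pairs of set partitions
of `{1,…,n}` into `k` blocks having the same set of block minima. -/
theorem stmt6 (n k : ℕ) (hk : 1 ≤ k) (hkn : k ≤ n) :
    U n k = Nat.card {pq : Finpartition (Finset.univ : Finset (Fin n)) ×
        Finpartition (Finset.univ : Finset (Fin n)) //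
      pq.1.parts.card = k ∧ pq.2.parts.card = k ∧ blockMins pq.1 = blockMins pq.2} :=
  stmt6_general n k
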